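/- arXiv:2106.12892 — 6 statements merged into one kernel-verified Lean document; each statement's English description precedes it below -/
import Mathlib

section
/- Let K be an absorptive, fully-continuous commutative semiring with a^∞ = inf_{n ∈ ℕ} a^n. Then (a·b)^∞ = a^∞ · b^∞ for all a, b ∈ K. -/
/-!
Since `a * b ≤ a`, powers decrease and multiplication is monotone, so along the diagonal
`(a * b) ^ n = a ^ n * b ^ n` the infimum equals the double infimum `⨅ n m, a ^ n * b ^ m`.
Multiplication commutes with infima of chains, so that double infimum splits as
`(⨅ n, a ^ n) * (⨅ m, b ^ m)`.
-/

theorem iInf_diag_of_antitone {α ι : Type*} [CompleteLattice α] [SemilatticeSup ι]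
    {F : ι → ι → α} (h₁ : ∀ j, Antitone (F · j)) (h₂ : ∀ i, Antitone (F i)) :
    ⨅ i, F i i = ⨅ i, ⨅ j, F i j :=
  le_antisymm
    (le_iInf₂ fun i j => (iInf_le _ (i ⊔ j)).trans <|
      (h₂ _ le_sup_right).trans (h₁ j le_sup_left))
    (le_iInf fun i => (iInf_le _ i).trans (iInf_le _ i))

section NaturalOrder

variable {K : Type*} [CommSemiring K] [Preorder K]

theorem mulLeftMono_of_le_iff_add_eq (hle : ∀ a b : K, a ≤ b ↔ a + b = b) : MulLeftMono K :=
  ⟨fun c x y h => by rw [hle] at h ⊢; rw [← mul_add, h]⟩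

theorem antitone_pow_of_absorptive (hle : ∀ a b : K, a ≤ b ↔ a + b = b)
    (habs : ∀ a b : K, a + a * b = a) (c : K) : Antitone (c ^ ·) :=
  antitone_nat_of_succ_le fun n => by
    rw [hle, add_comm, pow_succ]
    exact habs _ _

end NaturalOrder

theorem mul_iInf_of_isChain {K ι : Type*} [Mul K] [CompleteLattice K] [Nonempty ι]
    (hinf_mul : ∀ (a : K) (C : Set K), C.Nonempty → IsChain (· ≤ ·) C →
      sInf ((a * ·) '' C) = a * sInf C)
    {f : ι → K} (hf : IsChain (· ≤ ·) (Set.range f)) (x : K) :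
    x * ⨅ i, f i = ⨅ i, x * f i := by
  rw [iInf, ← hinf_mul x _ (Set.range_nonempty f) hf, ← Set.range_comp]
  rfl

theorem infinitary_power_mul_general {K : Type*} [CommSemiring K] [CompleteLattice K]
    (hle : ∀ a b : K, a ≤ b ↔ a + b = b)
    (habs : ∀ a b : K, a + a * b = a)
    (hinf_mul : ∀ (a : K) (C : Set K), C.Nonempty → IsChain (· ≤ ·) C →
      sInf ((a * ·) '' C) = a * sInf C)
    (a b : K) : (⨅ n : ℕ, (a * b) ^ n) = (⨅ n : ℕ, a ^ n) * (⨅ n : ℕ, b ^ n) := by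
  have := mulLeftMono_of_le_iff_add_eq hle
  have hpow := antitone_pow_of_absorptive hle habs
  calc ⨅ n : ℕ, (a * b) ^ n = ⨅ n : ℕ, a ^ n * b ^ n := by simp_rw [mul_pow]
    _ = ⨅ n : ℕ, ⨅ m : ℕ, a ^ n * b ^ m :=
        iInf_diag_of_antitone (fun m _ _ h => mul_le_mul_left (hpow a h) (b ^ m))
          (fun n _ _ h => mul_le_mul_right (hpow b h) (a ^ n))
    _ = ⨅ n : ℕ, a ^ n * ⨅ m : ℕ, b ^ m := by
        simp_rw [mul_iInf_of_isChain hinf_mul (hpow b).isChain_range]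
    _ = (⨅ n : ℕ, a ^ n) * ⨅ m : ℕ, b ^ m := by
        rw [mul_comm, mul_iInf_of_isChain hinf_mul (hpow a).isChain_range]
        simp_rw [mul_comm]

/-- In an absorptive, fully-continuous commutative semiring,
`(a*b)^∞ = a^∞ * b^∞`. -/
theorem infinitary_power_mul {K : Type*} [CommSemiring K] [CompleteLattice K]
    (hle : ∀ a b : K, a ≤ b ↔ a + b = b)
    (habs : ∀ a b : K, a + a * b = a)
    (hsup_add : ∀ (a : K) (C : Set K), C.Nonempty → IsChain (· ≤ ·) C →
      sSup ((a + ·) '' C) = a + sSup C)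
    (hinf_add : ∀ (a : K) (C : Set K), C.Nonempty → IsChain (· ≤ ·) C →
      sInf ((a + ·) '' C) = a + sInf C)
    (hsup_mul : ∀ (a : K) (C : Set K), C.Nonempty → IsChain (· ≤ ·) C →
      sSup ((a * ·) '' C) = a * sSup C)
    (hinf_mul : ∀ (a : K) (C : Set K), C.Nonempty → IsChain (· ≤ ·) C →
      sInf ((a * ·) '' C) = a * sInf C)
    (a b : K) : (⨅ n : ℕ, (a * b) ^ n) = (⨅ n : ℕ, a ^ n) * (⨅ n : ℕ, b ^ n) :=
  infinitary_power_mul_general hle habs hinf_mul a b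
end

section
/- Let K be an absorptive, fully-continuous commutative semiring with a^∞ = inf_{n ∈ ℕ} a^n. Then (a + b)^∞ = a^∞ + b^∞ for all a, b ∈ K. -/
/-- In an absorptive, fully-continuous commutative semiring,
`(a+b)^∞ = a^∞ + b^∞`. -/
theorem infinitary_power_add {K : Type*} [CommSemiring K] [CompleteLattice K]
    (hle : ∀ a b : K, a ≤ b ↔ a + b = b)
    (habs : ∀ a b : K, a + a * b = a)
    (hsup_add : ∀ (a : K) (C : Set K), C.Nonempty → IsChain (· ≤ ·) C →
      sSup ((a + ·) '' C) = a + sSup C)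
    (hinf_add : ∀ (a : K) (C : Set K), C.Nonempty → IsChain (· ≤ ·) C →
      sInf ((a + ·) '' C) = a + sInf C)
    (hsup_mul : ∀ (a : K) (C : Set K), C.Nonempty → IsChain (· ≤ ·) C →
      sSup ((a * ·) '' C) = a * sSup C)
    (hinf_mul : ∀ (a : K) (C : Set K), C.Nonempty → IsChain (· ≤ ·) C →
      sInf ((a * ·) '' C) = a * sInf C)
    (a b : K) : (⨅ n : ℕ, (a + b) ^ n) = (⨅ n : ℕ, a ^ n) + (⨅ n : ℕ, b ^ n) := by
  have add_idem : ∀ x : K, x + x = x := fun x => by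
    have h := habs x 1; rwa [mul_one] at h
  have zero_le' : ∀ x : K, (0 : K) ≤ x := fun x => (hle 0 x).2 (zero_add x)
  have le_add_right : ∀ x y : K, x ≤ x + y := fun x y =>
    (hle _ _).2 (by rw [← add_assoc, add_idem])
  have le_add_left : ∀ x y : K, x ≤ y + x := fun x y =>
    (hle _ _).2 (by rw [add_comm y x, ← add_assoc, add_idem])
  have add_le' : ∀ {x y c : K}, x ≤ c → y ≤ c → x + y ≤ c := by
    intro x y c hx hy
    rw [hle] at hx hy ⊢
    rw [add_assoc, hy, hx]
  have mul_le_left : ∀ x y : K, x * y ≤ x := fun x y =>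
    (hle _ _).2 (by rw [add_comm]; exact habs x y)
  have mul_mono : ∀ {x y : K} (c : K), x ≤ y → c * x ≤ c * y := by
    intro x y c h
    rw [hle] at h ⊢
    rw [← mul_add, h]
  have pow_anti : ∀ (x : K) {m n : ℕ}, m ≤ n → x ^ n ≤ x ^ m := by
    intro x m n h
    obtain ⟨k, rfl⟩ := Nat.exists_eq_add_of_le h
    rw [pow_add]
    exact mul_le_left _ _
  have pow_mono : ∀ {x y : K} (n : ℕ), x ≤ y → x ^ n ≤ y ^ n := by
    intro x y n h
    induction n with
    | zero => simp
    | succ n ih =>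
      calc x ^ (n + 1) = x ^ n * x := pow_succ x n
        _ ≤ x ^ n * y := mul_mono _ h
        _ = y * x ^ n := mul_comm _ _
        _ ≤ y * y ^ n := mul_mono _ ih
        _ = y ^ (n + 1) := by rw [pow_succ, mul_comm]
  have sum_le : ∀ {c : K} (s : Finset ℕ) (f : ℕ → K),
      (∀ i ∈ s, f i ≤ c) → ∑ i ∈ s, f i ≤ c := by
    intro c s f h
    refine Finset.sum_induction f (· ≤ c) (fun _ _ => add_le') (zero_le' c) h
  -- key binomial bound
  have key : ∀ n m : ℕ, (a + b) ^ (n + m) ≤ a ^ n + b ^ m := by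
    intro n m
    rw [add_pow]
    apply sum_le
    intro i hi
    rw [Finset.mem_range] at hi
    refine le_trans (mul_le_left _ _) ?_
    by_cases h : n ≤ i
    · refine le_trans ?_ (le_add_right _ _)
      obtain ⟨k, rfl⟩ := Nat.exists_eq_add_of_le h
      calc a ^ (n + k) * b ^ (n + m - (n + k)) =
            a ^ n * (a ^ k * b ^ (n + m - (n + k))) := by rw [pow_add, mul_assoc]
        _ ≤ a ^ n := mul_le_left _ _
    · push_neg at h
      refine le_trans ?_ (le_add_left _ _)
      have hm : n + m - i = m + (n - i) := by omega
      calc a ^ i * b ^ (n + m - i) = b ^ m * (a ^ i * b ^ (n - i)) := by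
            rw [hm, pow_add]; ring
        _ ≤ b ^ m := mul_le_left _ _
  have chain_pow : ∀ x : K, IsChain (· ≤ ·) (Set.range fun n : ℕ => x ^ n) := by
    intro x
    rintro _ ⟨n, rfl⟩ _ ⟨m, rfl⟩ _
    rcases le_total n m with h | h
    · exact Or.inr (pow_anti x h)
    · exact Or.inl (pow_anti x h)
  have inf_add_pow : ∀ (c x : K), (⨅ n : ℕ, (c + x ^ n)) = c + ⨅ n : ℕ, x ^ n := by
    intro c x
    have h := hinf_add c (Set.range fun n : ℕ => x ^ n) ⟨x ^ 0, ⟨0, rfl⟩⟩ (chain_pow x)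
    rw [iInf, iInf, ← h, ← Set.range_comp]
    rfl
  apply le_antisymm
  · calc (⨅ k : ℕ, (a + b) ^ k) ≤ ⨅ n : ℕ, ⨅ m : ℕ, (a ^ n + b ^ m) :=
          le_iInf fun n => le_iInf fun m => le_trans (iInf_le _ (n + m)) (key n m)
      _ = ⨅ n : ℕ, (a ^ n + ⨅ m : ℕ, b ^ m) := by
          exact iInf_congr fun n => inf_add_pow (a ^ n) b
      _ = ⨅ n : ℕ, ((⨅ m : ℕ, b ^ m) + a ^ n) := by
          exact iInf_congr fun n => add_comm _ _
      _ = (⨅ m : ℕ, b ^ m) + ⨅ n : ℕ, a ^ n := inf_add_pow _ a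
      _ = (⨅ n : ℕ, a ^ n) + ⨅ m : ℕ, b ^ m := add_comm _ _
  · refine le_iInf fun n => add_le' ?_ ?_
    · exact le_trans (iInf_le _ n) (pow_mono n (le_add_right a b))
    · exact le_trans (iInf_le _ n) (pow_mono n (le_add_left b a))
end

section
/- Let Γ be a finite Büchi game with positions V and let v₀ be a position. If a strategy S of Player 0 from v₀ is positional, then S is strictly absorption-dominant: there is no strategy S' ≠ S from v₀ with S' ⪰ S. -/
/-- A Büchi game: positions `V` partitioned into Player 0's positions `V0` and
Player 1's positions `V1`, edge relation `E` with every position having a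
successor, and target set `F`. -/
structure BuchiGame (V : Type*) where
  V0 : Set V
  V1 : Set V
  E : V → V → Prop
  F : Set V
  cover : ∀ v, v ∈ V0 ∨ v ∈ V1
  disjoint : ∀ v, ¬(v ∈ V0 ∧ v ∈ V1)
  nonempty_succ : ∀ v, ∃ w, E v w

/-- A strategy of Player 0 from `v0`, represented as a subtree of the tree
unraveling of the game: a set of finite paths from `v0` which is prefix-closed,
has a unique chosen successor at nodes ending in Player 0 positions, and all
successors at nodes ending in Player 1 positions. -/
structure BuchiStrategy {V : Type*} (G : BuchiGame V) (v0 : V) where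
  tree : Set (List V)
  root_mem : [v0] ∈ tree
  isPath : ∀ ρ ∈ tree, ρ.head? = some v0 ∧ List.Chain' G.E ρ
  prefix_closed : ∀ (ρ : List V) (v : V), ρ ≠ [] → ρ ++ [v] ∈ tree → ρ ∈ tree
  choice0 : ∀ (ρ : List V) (v : V), ρ ++ [v] ∈ tree → v ∈ G.V0 →
    ∃! w : V, ρ ++ [v, w] ∈ tree
  choice1 : ∀ (ρ : List V) (v : V), ρ ++ [v] ∈ tree → v ∈ G.V1 →
    ∀ w : V, G.E v w → ρ ++ [v, w] ∈ tree

namespace BuchiStrategy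

variable {V : Type*} {G : BuchiGame V} {v0 : V}

/-- The number of occurrences (in `ℕ∞`) of the edge `e` in the strategy tree. -/
noncomputable def edgeCount (S : BuchiStrategy G v0) (e : V × V) : ℕ∞ :=
  {ρ : List V | ρ ++ [e.1, e.2] ∈ S.tree}.encard

/-- `S₁` absorbs `S₂`: every edge occurs in `S₁` at most as often as in `S₂`. -/
def Absorbs (S₁ S₂ : BuchiStrategy G v0) : Prop :=
  ∀ e : V × V, S₁.edgeCount e ≤ S₂.edgeCount e

/-- `S₁` strictly absorbs `S₂`. -/
def StrictlyAbsorbs (S₁ S₂ : BuchiStrategy G v0) : Prop :=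
  Absorbs S₁ S₂ ∧ ∃ e : V × V, S₁.edgeCount e < S₂.edgeCount e

/-- A strategy is absorption-dominant from `v0` if no strategy strictly absorbs it. -/
def AbsorptionDominant (S : BuchiStrategy G v0) : Prop :=
  ∀ S' : BuchiStrategy G v0, ¬ StrictlyAbsorbs S' S

/-- A strategy is positional if all occurrences of any Player 0 position have
the same chosen successor. -/
def Positional (S : BuchiStrategy G v0) : Prop :=
  ∀ v ∈ G.V0, ∀ (ρ ρ' : List V) (w w' : V),
    ρ ++ [v, w] ∈ S.tree → ρ' ++ [v, w'] ∈ S.tree → w = w'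

/-- An infinite play consistent with the strategy: all finite prefixes lie in
the strategy tree. -/
def ConsistentPlay (S : BuchiStrategy G v0) (f : ℕ → V) : Prop :=
  ∀ n : ℕ, (List.range (n + 1)).map f ∈ S.tree

/-- A strategy is winning if every consistent play visits `F` infinitely often. -/
def Winning (S : BuchiStrategy G v0) : Prop :=
  ∀ f : ℕ → V, S.ConsistentPlay f → ∀ n : ℕ, ∃ m : ℕ, n ≤ m ∧ f m ∈ G.F

end BuchiStrategy


/-!
If `S'` absorbs `S`, then every edge used by `S'` is used somewhere by `S`. At a Player 0
node of `S` the positional strategy `S` makes the only choice it ever makes at that position,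
so `S'` can only make the same one, while at Player 1 nodes `S` contains all successors;
by induction along paths, the tree of `S'` lies inside that of `S`. Finally, a strategy tree
contained in another one equals it: both make exactly one choice at every Player 0 node and
keep every move of Player 1.
-/

namespace BuchiStrategy

variable {V : Type*} {G : BuchiGame V} {v0 : V}

theorem ext {S S' : BuchiStrategy G v0} (h : S.tree = S'.tree) : S = S' := by
  cases S; cases S'; subst h; rfl

theorem edge_of_mem (S : BuchiStrategy G v0) {ρ : List V} {v w : V}
    (h : ρ ++ [v, w] ∈ S.tree) : G.E v w := by
  have hchain := (S.isPath _ h).2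
  rw [← List.singleton_append, ← List.append_assoc] at hchain
  exact (List.isChain_append.mp hchain).2.2 v (by simp) w (by simp)

theorem edgeCount_ne_zero_iff (S : BuchiStrategy G v0) {v w : V} :
    S.edgeCount (v, w) ≠ 0 ↔ ∃ ρ, ρ ++ [v, w] ∈ S.tree := by
  simp only [edgeCount, ne_eq, Set.encard_eq_zero, ← Set.nonempty_iff_ne_empty]
  rfl

theorem Positional.mem_of_edge_mem {S : BuchiStrategy G v0} (hS : S.Positional) {ρ π : List V}
    {v w : V} (hv : v ∈ G.V0) (hρ : ρ ++ [v] ∈ S.tree) (hπ : π ++ [v, w] ∈ S.tree) :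
    ρ ++ [v, w] ∈ S.tree := by
  obtain ⟨u, hu, -⟩ := S.choice0 ρ v hρ hv
  rwa [hS v hv π ρ w u hπ hu]

theorem tree_subset_of_step {S S' : BuchiStrategy G v0}
    (step : ∀ (ρ : List V) (v w : V), ρ ++ [v] ∈ S'.tree → ρ ++ [v, w] ∈ S.tree →
      ρ ++ [v, w] ∈ S'.tree) :
    S.tree ⊆ S'.tree := by
  intro l hl
  induction l using List.reverseRecOn with
  | nil => simpa using (S.isPath _ hl).1
  | append_singleton l w ih =>
    rcases l.eq_nil_or_concat' with rfl | ⟨ρ, v, rfl⟩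
    · obtain rfl : w = v0 := by simpa using (S.isPath _ hl).1
      exact S'.root_mem
    · have hprefix := ih (S.prefix_closed _ w (by simp) hl)
      simp only [List.append_assoc, List.singleton_append] at hl ⊢
      exact step ρ v w hprefix hl

theorem eq_of_tree_subset {S S' : BuchiStrategy G v0} (h : S'.tree ⊆ S.tree) : S' = S := by
  refine ext (h.antisymm (tree_subset_of_step fun ρ v w hρ hw ↦ ?_))
  rcases G.cover v with hv | hv
  · obtain ⟨w', hw', -⟩ := S'.choice0 ρ v hρ hv
    obtain ⟨u, -, hu⟩ := S.choice0 ρ v (h hρ) hv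
    rwa [hu w hw, ← hu w' (h hw')]
  · exact S'.choice1 ρ v hρ hv w (S.edge_of_mem hw)

theorem Absorbs.tree_subset {S S' : BuchiStrategy G v0} (habs : S'.Absorbs S)
    (hS : S.Positional) : S'.tree ⊆ S.tree := by
  refine tree_subset_of_step fun ρ v w hρ hw ↦ ?_
  rcases G.cover v with hv | hv
  · have hS' : S'.edgeCount (v, w) ≠ 0 := (S'.edgeCount_ne_zero_iff).2 ⟨ρ, hw⟩
    obtain ⟨π, hπ⟩ := (S.edgeCount_ne_zero_iff).1 fun h0 ↦ hS' (le_zero_iff.1 (h0 ▸ habs _))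
    exact hS.mem_of_edge_mem hv hρ hπ
  · exact S.choice1 ρ v hρ hv w (S'.edge_of_mem hw)

end BuchiStrategy

open BuchiStrategy in
theorem positional_strictly_absorption_dominant_general {V : Type*}
    {G : BuchiGame V} {v0 : V} (S : BuchiStrategy G v0)
    (hpos : S.Positional) :
    ¬ ∃ S' : BuchiStrategy G v0, S' ≠ S ∧ S'.Absorbs S := by
  rintro ⟨S', hne, habs⟩
  exact hne (eq_of_tree_subset (habs.tree_subset hpos))

open BuchiStrategy in
/-- In a finite Büchi game, every positional strategy of Player 0 from `v0` is
strictly absorption-dominant: no other strategy absorbs it. -/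
theorem positional_strictly_absorption_dominant {V : Type*} [Fintype V]
    {G : BuchiGame V} {v0 : V} (S : BuchiStrategy G v0)
    (hpos : S.Positional) :
    ¬ ∃ S' : BuchiStrategy G v0, S' ≠ S ∧ S'.Absorbs S :=
  positional_strictly_absorption_dominant_general S hpos
end

section
/- Let Γ be a finite Büchi game and v₀ a position. If a strategy S of Player 0 from v₀ is strictly absorption-dominant (no other strategy S' from v₀ satisfies S' ⪰ S), then S is positional. -/
/-!
If `S` chooses different successors at two occurrences `p` and `q` of the same Player 0
position, with `q` not a prefix of `p`, relabel the histories of `S` by the map that exchanges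
everything strictly below `p` with everything strictly below `q` (when `p` is a prefix of `q`, it
only redirects the subtree at `p` to that at `q`). Pulling `S` back along this injective,
edge-preserving relabelling gives a strategy that uses every edge at most as often as `S` but
plays at `p` what `S` plays at `q`, so `S` is not strictly absorption-dominant.
-/

namespace BuchiStrategy

variable {V : Type*} {G : BuchiGame V} {v0 : V}

theorem eq_of_append_pair_mem (S : BuchiStrategy G v0) {ρ : List V} {v w w' : V}
    (hv : v ∈ G.V0) (hw : ρ ++ [v, w] ∈ S.tree) (hw' : ρ ++ [v, w'] ∈ S.tree) : w = w' := by
  obtain ⟨_, _, huniq⟩ :=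
    S.choice0 ρ v (S.prefix_closed _ w (by simp) (by rwa [← List.append_cons])) hv
  exact (huniq w hw).trans (huniq w' hw').symm

section Pullback

variable (S : BuchiStrategy G v0) (h : List V → List V)

/-- `h` relabels histories of a new strategy by histories of `S`, keeping the current position;
the new strategy plays from `σ` whatever `S` plays from `h σ`. -/
structure IsPullbackMap : Prop where
  getLast?_eq : ∀ σ, (h σ).getLast? = σ.getLast?
  mem_snoc_iff : ∀ σ x, h (σ ++ [x]) ∈ S.tree ↔ h σ ++ [x] ∈ S.tree

def pullbackTree : Set (List V) :=
  {σ | ∃ τ x, σ = τ ++ [x] ∧ h τ ++ [x] ∈ S.tree}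

variable {S h}

@[simp]
theorem snoc_mem_pullbackTree {σ : List V} {x : V} :
    σ ++ [x] ∈ pullbackTree S h ↔ h σ ++ [x] ∈ S.tree := by
  constructor
  · rintro ⟨τ, y, he, hy⟩
    obtain ⟨rfl, rfl⟩ := List.append_singleton_inj.mp he
    exact hy
  · exact fun hx => ⟨σ, x, rfl, hx⟩

namespace IsPullbackMap

theorem map_nil (hh : S.IsPullbackMap h) : h [] = [] :=
  List.getLast?_eq_none_iff.mp (hh.getLast?_eq [])

theorem map_ne_nil (hh : S.IsPullbackMap h) {σ : List V} {x : V} : h (σ ++ [x]) ≠ [] := by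
  simp [← List.getLast?_eq_none_iff, hh.getLast?_eq]

theorem mem_pullbackTree_of_snoc (hh : S.IsPullbackMap h) {σ : List V} {x : V} (hσ : σ ≠ [])
    (hx : σ ++ [x] ∈ pullbackTree S h) : σ ∈ pullbackTree S h := by
  obtain ⟨τ, y, rfl⟩ := (List.eq_nil_or_concat' σ).resolve_left hσ
  rw [snoc_mem_pullbackTree] at hx ⊢
  rw [← hh.mem_snoc_iff]
  exact S.prefix_closed _ x hh.map_ne_nil hx

theorem isPath_snoc (hh : S.IsPullbackMap h) (σ : List V) (x : V) (hx : h σ ++ [x] ∈ S.tree) :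
    (σ ++ [x]).head? = some v0 ∧ List.IsChain G.E (σ ++ [x]) := by
  induction σ using List.reverseRecOn generalizing x with
  | nil =>
    exact ⟨by simpa [hh.map_nil] using (S.isPath _ hx).1, List.isChain_singleton x⟩
  | append_singleton τ y ih =>
    have hy : h τ ++ [y] ∈ S.tree := snoc_mem_pullbackTree.mp
      (hh.mem_pullbackTree_of_snoc (by simp) (snoc_mem_pullbackTree.mpr hx))
    obtain ⟨hhead, hchain⟩ := ih y hy
    have hE : List.IsChain G.E (h (τ ++ [y]) ++ [x]) := (S.isPath _ hx).2
    rw [List.isChain_append] at hE ⊢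
    refine ⟨by simp_all [List.head?_append], hchain, by simp, ?_⟩
    simpa [hh.getLast?_eq] using hE.2.2

theorem choice_snoc (hh : S.IsPullbackMap h) {σ : List V} {x : V} (hx : h σ ++ [x] ∈ S.tree) :
    ∃ μ, μ ++ [x] ∈ S.tree ∧ ∀ y, σ ++ [x, y] ∈ pullbackTree S h ↔ μ ++ [x, y] ∈ S.tree := by
  have hsplit : (h (σ ++ [x])).dropLast ++ [x] = h (σ ++ [x]) :=
    List.dropLast_append_getLast? x (by simp [hh.getLast?_eq])
  refine ⟨_, by rwa [hsplit, hh.mem_snoc_iff], fun y => ?_⟩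
  rw [List.append_cons σ x [y], snoc_mem_pullbackTree, List.append_cons _ x [y], hsplit]

end IsPullbackMap

variable (S h) in
def pullback (hh : S.IsPullbackMap h) : BuchiStrategy G v0 where
  tree := pullbackTree S h
  root_mem := (snoc_mem_pullbackTree (σ := [])).mpr (by simpa [hh.map_nil] using S.root_mem)
  isPath := by
    rintro _ ⟨σ, x, rfl, hx⟩
    exact hh.isPath_snoc σ x hx
  prefix_closed _ _ := hh.mem_pullbackTree_of_snoc
  choice0 ρ v hv h0 := by
    obtain ⟨μ, hμ, hiff⟩ := hh.choice_snoc (snoc_mem_pullbackTree.mp hv)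
    simpa only [hiff] using S.choice0 μ v hμ h0
  choice1 ρ v hv h1 w hw := by
    obtain ⟨μ, hμ, hiff⟩ := hh.choice_snoc (snoc_mem_pullbackTree.mp hv)
    exact (hiff w).mpr (S.choice1 μ v hμ h1 w hw)

theorem IsPullbackMap.pullback_absorbs (hh : S.IsPullbackMap h) (hinj : Function.Injective h) :
    (S.pullback h hh).Absorbs S := by
  rintro ⟨a, b⟩
  have hsplit (σ : List V) : h (σ ++ [a]) = (h (σ ++ [a])).dropLast ++ [a] :=
    (List.dropLast_append_getLast? a (by simp [hh.getLast?_eq])).symm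
  refine Set.encard_le_encard_of_injOn (f := fun σ => (h (σ ++ [a])).dropLast) ?_ ?_
  · intro σ hσ
    change σ ++ [a, b] ∈ pullbackTree S h at hσ
    rw [List.append_cons σ a [b], snoc_mem_pullbackTree, hsplit] at hσ
    change _ ++ [a, b] ∈ S.tree
    rwa [List.append_cons _ a [b]]
  · intro σ₁ _ σ₂ _ he
    refine List.append_cancel_right (bs := [a]) (hinj ?_)
    rw [hsplit σ₁, hsplit σ₂]
    exact congrArg (· ++ [a]) he

end Pullback

section SwapBelow

variable {p q σ : List V} {x : V}

open Classical in
noncomputable def swapBelow (p q σ : List V) : List V :=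
  if p <+: σ then q ++ σ.drop p.length
  else if q <+: σ then p ++ σ.drop q.length
  else σ

theorem swapBelow_left_append (t : List V) : swapBelow p q (p ++ t) = q ++ t := by
  simp [swapBelow]

theorem swapBelow_left : swapBelow p q p = q := by
  simpa using swapBelow_left_append (p := p) (q := q) []

theorem swapBelow_right_append {t : List V} (h : ¬ p <+: q ++ t) :
    swapBelow p q (q ++ t) = p ++ t := by
  simp [swapBelow, h]

theorem swapBelow_of_not_prefix (hp : ¬ p <+: σ) (hq : ¬ q <+: σ) : swapBelow p q σ = σ := by
  simp [swapBelow, hp, hq]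

theorem swapBelow_snoc_of_prefix (hp : p <+: σ) :
    swapBelow p q (σ ++ [x]) = swapBelow p q σ ++ [x] := by
  obtain ⟨t, rfl⟩ := hp
  rw [List.append_assoc, swapBelow_left_append, swapBelow_left_append, List.append_assoc]

theorem swapBelow_snoc (hp : σ ++ [x] ≠ p) (hq : σ ++ [x] ≠ q) :
    swapBelow p q (σ ++ [x]) = swapBelow p q σ ++ [x] := by
  have hp' : p <+: σ ++ [x] ↔ p <+: σ := by simp [List.prefix_concat_iff, Ne.symm hp]
  have hq' : q <+: σ ++ [x] ↔ q <+: σ := by simp [List.prefix_concat_iff, Ne.symm hq]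
  by_cases h1 : p <+: σ
  · exact swapBelow_snoc_of_prefix h1
  by_cases h2 : q <+: σ
  · obtain ⟨t, rfl⟩ := h2
    rw [List.append_assoc] at hp' ⊢
    rw [swapBelow_right_append (hp'.not.mpr h1), swapBelow_right_append h1, List.append_assoc]
  rw [swapBelow_of_not_prefix (hp'.not.mpr h1) (hq'.not.mpr h2), swapBelow_of_not_prefix h1 h2]

theorem getLast?_swapBelow (hpq : p.getLast? = q.getLast?) (σ : List V) :
    (swapBelow p q σ).getLast? = σ.getLast? := by
  unfold swapBelow
  split_ifs with h1 h2
  · obtain ⟨t, rfl⟩ := h1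
    simp [List.getLast?_append, hpq]
  · obtain ⟨t, rfl⟩ := h2
    simp [List.getLast?_append, hpq]
  · rfl

theorem swapBelow_swapBelow (hqp : ¬ q <+: p) (σ : List V) :
    swapBelow q p (swapBelow p q σ) = σ := by
  by_cases h1 : p <+: σ
  · obtain ⟨t, rfl⟩ := h1
    rw [swapBelow_left_append, swapBelow_left_append]
  by_cases h2 : q <+: σ
  · obtain ⟨t, rfl⟩ := h2
    have hqpt : ¬ q <+: p ++ t := fun h =>
      (List.prefix_or_prefix_of_prefix h (List.prefix_append p t)).elim hqp
        fun hpq => h1 (hpq.trans (List.prefix_append q t))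
    rw [swapBelow_right_append h1, swapBelow_right_append hqpt]
  rw [swapBelow_of_not_prefix h1 h2, swapBelow_of_not_prefix h2 h1]

/-- Away from `p` and `q` the relabelling commutes with extending a history; at `p` and `q`
themselves both sides are the nodes `p` and `q` of `S`. -/
theorem swapBelow_snoc_mem_iff {S : BuchiStrategy G v0} (hp : p ∈ S.tree) (hq : q ∈ S.tree)
    (hqp : ¬ q <+: p) (σ : List V) (x : V) :
    swapBelow p q (σ ++ [x]) ∈ S.tree ↔ swapBelow p q σ ++ [x] ∈ S.tree := by
  by_cases hpσ : p <+: σ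
  · rw [swapBelow_snoc_of_prefix hpσ]
  by_cases hxp : σ ++ [x] = p
  · have hqσ : ¬ q <+: σ := fun h => hqp (h.trans (hxp ▸ List.prefix_append σ [x]))
    rw [swapBelow_of_not_prefix hpσ hqσ, hxp, swapBelow_left]
    exact iff_of_true hq hp
  by_cases hxq : σ ++ [x] = q
  · have hqσ : ¬ q <+: σ := fun h => by
      have := h.length_le
      rw [← hxq] at this
      simp at this
    have hpq : ¬ p <+: q ++ [] := by
      rw [List.append_nil, ← hxq, List.prefix_concat_iff, not_or]
      exact ⟨fun h => hqp (by rw [h, hxq]), hpσ⟩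
    have hqq : swapBelow p q q = p := by simpa using swapBelow_right_append hpq
    rw [swapBelow_of_not_prefix hpσ hqσ, hxq, hqq]
    exact iff_of_true hp hq
  rw [swapBelow_snoc hxp hxq]

theorem isPullbackMap_swapBelow {S : BuchiStrategy G v0} (hp : p ∈ S.tree) (hq : q ∈ S.tree)
    (hpq : p.getLast? = q.getLast?) (hqp : ¬ q <+: p) : S.IsPullbackMap (swapBelow p q) :=
  ⟨getLast?_swapBelow hpq, swapBelow_snoc_mem_iff hp hq hqp⟩

end SwapBelow

theorem exists_ne_absorbs (S : BuchiStrategy G v0) {v w w' : V} {ρ ρ' : List V}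
    (hv : v ∈ G.V0) (hw : ρ ++ [v, w] ∈ S.tree) (hw' : ρ' ++ [v, w'] ∈ S.tree) (hne : w ≠ w')
    (hqp : ¬ ρ' ++ [v] <+: ρ ++ [v]) : ∃ S' : BuchiStrategy G v0, S' ≠ S ∧ S'.Absorbs S := by
  have hp : ρ ++ [v] ∈ S.tree := S.prefix_closed _ w (by simp) (by rwa [← List.append_cons])
  have hq : ρ' ++ [v] ∈ S.tree := S.prefix_closed _ w' (by simp) (by rwa [← List.append_cons])
  have hh := isPullbackMap_swapBelow hp hq (by simp) hqp
  refine ⟨S.pullback _ hh, fun heq => hne ?_,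
    hh.pullback_absorbs (Function.LeftInverse.injective (swapBelow_swapBelow hqp))⟩
  have hw'' : ρ ++ [v, w'] ∈ (S.pullback _ hh).tree := by
    change _ ∈ pullbackTree S _
    rwa [List.append_cons ρ v [w'], snoc_mem_pullbackTree, swapBelow_left, ← List.append_cons]
  exact S.eq_of_append_pair_mem hv hw (heq ▸ hw'')

end BuchiStrategy

open BuchiStrategy in
theorem strictly_absorption_dominant_positional_general {V : Type*}
    {G : BuchiGame V} {v0 : V} (S : BuchiStrategy G v0)
    (hdom : ¬ ∃ S' : BuchiStrategy G v0, S' ≠ S ∧ S'.Absorbs S) :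
    S.Positional := by
  intro v hv ρ ρ' w w' hw hw'
  by_contra hne
  by_cases hqp : ρ' ++ [v] <+: ρ ++ [v]
  · by_cases hpq : ρ ++ [v] <+: ρ' ++ [v]
    · obtain rfl : ρ = ρ' := by
        simpa using hpq.eq_of_length (le_antisymm hpq.length_le hqp.length_le)
      exact hne (S.eq_of_append_pair_mem hv hw hw')
    · exact hdom (S.exists_ne_absorbs hv hw' hw (Ne.symm hne) hpq)
  · exact hdom (S.exists_ne_absorbs hv hw hw' hne hqp)

open BuchiStrategy in
/-- In a finite Büchi game, every strictly absorption-dominant strategy of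
Player 0 from `v0` is positional. -/
theorem strictly_absorption_dominant_positional {V : Type*} [Fintype V]
    {G : BuchiGame V} {v0 : V} (S : BuchiStrategy G v0)
    (hdom : ¬ ∃ S' : BuchiStrategy G v0, S' ≠ S ∧ S'.Absorbs S) :
    S.Positional :=
  strictly_absorption_dominant_positional_general S hdom
end

section
/- Let Γ be a finite Büchi game, v a position, and S an absorption-dominant winning strategy of Player 0 from v. If a position w ∈ V₀ occurs infinitely often in the strategy tree S, then S plays positionally from w: all occurrences of w in S have the same chosen successor. -/
/-!
Fix an occurrence `ρ₀ ++ [w]` of `w` in `S` below which every edge of `S` occurs infinitely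
often; it exists because only finitely many edges occur finitely often, so only finitely many
nodes lie above such an edge, while `w` occurs infinitely often. Grafting the subtree of `S` at
`ρ₀ ++ [w]` onto every occurrence of `w` gives a strategy that only uses edges of `S` at most as
often as `S` does: outside the grafted parts it is a subtree of `S`, inside them every edge already
has infinite count. If some occurrence of `w` in `S` chose a successor `u` different from the one
at `ρ₀ ++ [w]`, the edge `(w, u)` would disappear, so `S` would be strictly absorbed.
-/

namespace BuchiStrategy

variable {V : Type*} {G : BuchiGame V} {v0 : V}

section EdgesBelowInfinite

variable (S : BuchiStrategy G v0)

def EdgesBelowInfinite (σ : List V) : Prop :=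
  ∀ τ a b, τ ++ [a, b] ∈ S.tree → σ <+: τ ++ [a, b] → S.edgeCount (a, b) = ⊤

lemma finite_setOf_not_edgesBelowInfinite [Finite V] :
    {σ | ¬ S.EdgesBelowInfinite σ}.Finite := by
  have hfin (e : V × V) : {τ | τ ++ [e.1, e.2] ∈ S.tree ∧ S.edgeCount e ≠ ⊤}.Finite := by
    by_cases he : S.edgeCount e = ⊤
    · simp [he]
    · exact (Set.encard_ne_top_iff.1 he).subset fun τ hτ => hτ.1
  refine (Set.finite_iUnion fun e => (hfin e).biUnion fun τ _ =>
    List.finite_toSet (τ ++ [e.1, e.2]).inits).subset ?_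
  intro σ hσ
  simp only [EdgesBelowInfinite, not_forall] at hσ
  obtain ⟨τ, a, b, hτ, hpre, hab⟩ := hσ
  simp only [Set.mem_iUnion]
  exact ⟨(a, b), τ, ⟨hτ, hab⟩, (List.mem_inits _ _).2 hpre⟩

lemma exists_concat_mem_edgesBelowInfinite [Finite V] (w : V)
    (hinf : {ρ | ρ ++ [w] ∈ S.tree}.Infinite) :
    ∃ ρ, ρ ++ [w] ∈ S.tree ∧ S.EdgesBelowInfinite (ρ ++ [w]) := by
  have hbad : {ρ : List V | ¬ S.EdgesBelowInfinite (ρ ++ [w])}.Finite :=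
    (S.finite_setOf_not_edgesBelowInfinite).preimage (List.append_left_injective [w]).injOn
  obtain ⟨ρ, hρ, hgood⟩ := (hinf.sdiff hbad).nonempty
  exact ⟨ρ, hρ, not_not.1 hgood⟩

end EdgesBelowInfinite

section Redirect

variable [DecidableEq V] (ρ : List V) (w : V)

/-- The node of `S` whose subtree is replayed after the history `μ` of the grafted strategy. -/
def redirect : List V → List V :=
  List.foldl (fun acc x => if x = w then ρ ++ [w] else acc ++ [x]) []

variable {ρ w}

@[simp]
lemma redirect_nil : redirect ρ w [] = [] := rfl

lemma redirect_concat (μ : List V) (x : V) :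
    redirect ρ w (μ ++ [x]) = if x = w then ρ ++ [w] else redirect ρ w μ ++ [x] :=
  List.foldl_concat _ _ _ _

lemma exists_redirect_concat_eq (μ : List V) (x : V) :
    ∃ τ, redirect ρ w (μ ++ [x]) = τ ++ [x] := by
  rw [redirect_concat]
  split_ifs with hx
  · exact ⟨ρ, hx ▸ rfl⟩
  · exact ⟨_, rfl⟩

lemma getLast?_redirect (μ : List V) : (redirect ρ w μ).getLast? = μ.getLast? := by
  induction μ using List.reverseRecOn with
  | nil => rfl
  | append_singleton μ x _ =>
    obtain ⟨τ, hτ⟩ := exists_redirect_concat_eq (ρ := ρ) (w := w) μ x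
    simp [hτ]

lemma redirect_eq_self {μ : List V} (hμ : w ∉ μ) : redirect ρ w μ = μ := by
  induction μ using List.reverseRecOn with
  | nil => rfl
  | append_singleton μ x ih =>
    simp only [List.mem_append, List.mem_singleton, not_or] at hμ
    rw [redirect_concat, if_neg (Ne.symm hμ.2), ih hμ.1]

lemma prefix_redirect {μ : List V} (hμ : w ∈ μ) : ρ ++ [w] <+: redirect ρ w μ := by
  induction μ using List.reverseRecOn with
  | nil => simp at hμ
  | append_singleton μ x ih =>
    rw [redirect_concat]
    split_ifs with hx
    · exact List.prefix_refl _
    · have hμ' : w ∈ μ := by simpa [Ne.symm hx] using hμ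
      exact (ih hμ').trans (List.prefix_append _ _)

end Redirect

variable [DecidableEq V] (S : BuchiStrategy G v0) (ρ : List V) (w : V)

/-- The tree obtained from `S` by replaying, after every occurrence of `w`, the subtree of `S`
at `ρ ++ [w]`. -/
def graftTree : Set (List V) :=
  {μ | μ ≠ [] ∧ ∀ π x, π ++ [x] <+: μ → redirect ρ w π ++ [x] ∈ S.tree}

variable {S ρ w}

lemma concat_mem_graftTree {μ : List V} {x : V} :
    μ ++ [x] ∈ graftTree S ρ w ↔
      (μ = [] ∨ μ ∈ graftTree S ρ w) ∧ redirect ρ w μ ++ [x] ∈ S.tree := by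
  constructor
  · rintro ⟨-, h⟩
    refine ⟨or_iff_not_imp_left.2 fun hμ => ⟨hμ, fun π y hπ => ?_⟩, h μ x (List.prefix_refl _)⟩
    exact h π y (hπ.trans (List.prefix_append _ _))
  · rintro ⟨hμ, hx⟩
    refine ⟨by simp, fun π y hπ => ?_⟩
    rcases List.prefix_concat_iff.1 hπ with heq | hπ
    · obtain ⟨rfl, hyx⟩ := List.append_inj' heq rfl
      cases hyx
      exact hx
    · rcases hμ with rfl | hμ
      · simp at hπ
      · exact hμ.2 π y hπ

lemma redirect_concat_mem (hσ : ρ ++ [w] ∈ S.tree) {μ : List V} {x : V}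
    (h : μ ++ [x] ∈ graftTree S ρ w) : redirect ρ w (μ ++ [x]) ∈ S.tree := by
  rw [redirect_concat]
  split_ifs with hx
  · exact hσ
  · exact (concat_mem_graftTree.1 h).2

lemma append_pair_mem_graftTree_iff {μ : List V} {x y : V} (h : μ ++ [x] ∈ graftTree S ρ w) :
    μ ++ [x, y] ∈ graftTree S ρ w ↔ redirect ρ w (μ ++ [x]) ++ [y] ∈ S.tree := by
  rw [show μ ++ [x, y] = μ ++ [x] ++ [y] by simp, concat_mem_graftTree]
  exact and_iff_right (Or.inr h)

lemma isPath_of_mem_graftTree {μ : List V} (hμ : μ ∈ graftTree S ρ w) :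
    μ.head? = some v0 ∧ List.IsChain G.E μ := by
  induction μ using List.reverseRecOn with
  | nil => exact absurd rfl hμ.1
  | append_singleton μ x ih =>
    obtain ⟨hμ | hμ, hx⟩ := concat_mem_graftTree.1 hμ
    · subst hμ
      exact ⟨by simpa using (S.isPath _ hx).1, List.isChain_singleton x⟩
    · obtain ⟨hhead, hchain⟩ := ih hμ
      have hlast := (List.isChain_append.1 (S.isPath _ hx).2).2.2
      rw [getLast?_redirect] at hlast
      exact ⟨by rwa [List.head?_append_of_ne_nil _ hμ.1],
        List.isChain_append.2 ⟨hchain, List.isChain_singleton x, hlast⟩⟩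

def graft (S : BuchiStrategy G v0) (hσ : ρ ++ [w] ∈ S.tree) : BuchiStrategy G v0 where
  tree := graftTree S ρ w
  root_mem := concat_mem_graftTree.2 ⟨Or.inl rfl, S.root_mem⟩
  isPath _ := isPath_of_mem_graftTree
  prefix_closed μ _ hμ h := (concat_mem_graftTree.1 h).1.resolve_left hμ
  choice0 μ x h hx := by
    obtain ⟨τ, hτ⟩ := exists_redirect_concat_eq (ρ := ρ) (w := w) μ x
    have hmem := redirect_concat_mem hσ h
    rw [hτ] at hmem
    simpa only [append_pair_mem_graftTree_iff h, hτ, List.append_assoc, List.cons_append,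
      List.nil_append] using S.choice0 τ x hmem hx
  choice1 μ x h hx y hxy := by
    obtain ⟨τ, hτ⟩ := exists_redirect_concat_eq (ρ := ρ) (w := w) μ x
    have hmem := redirect_concat_mem hσ h
    rw [hτ] at hmem
    rw [append_pair_mem_graftTree_iff h, hτ]
    simpa using S.choice1 τ x hmem hx y hxy

lemma edgeCount_graft_eq_zero (hσ : ρ ++ [w] ∈ S.tree) {u : V} (hu : ρ ++ [w, u] ∉ S.tree) :
    (S.graft hσ).edgeCount (w, u) = 0 := by
  refine Set.encard_eq_zero.2 (Set.eq_empty_of_forall_notMem fun μ hμ => hu ?_)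
  have hμw : μ ++ [w] ∈ graftTree S ρ w :=
    (S.graft hσ).prefix_closed _ u (by simp) (by simpa using hμ)
  simpa [redirect_concat] using (append_pair_mem_graftTree_iff hμw).1 hμ

lemma graft_absorbs (hσ : ρ ++ [w] ∈ S.tree) (hgood : S.EdgesBelowInfinite (ρ ++ [w])) :
    (S.graft hσ).Absorbs S := by
  rintro ⟨a, b⟩
  by_cases hab : S.edgeCount (a, b) = ⊤
  · exact hab ▸ le_top
  refine Set.encard_mono fun π (hπ : π ++ [a, b] ∈ graftTree S ρ w) => ?_
  have h := (concat_mem_graftTree (μ := π ++ [a]) (x := b) |>.1 (by simpa using hπ)).2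
  by_cases hw : w ∈ π ++ [a]
  · obtain ⟨τ, hτ⟩ := exists_redirect_concat_eq (ρ := ρ) (w := w) π a
    rw [hτ] at h
    have hpre := (prefix_redirect (ρ := ρ) hw).trans (List.prefix_append _ [b])
    rw [hτ] at hpre
    exact absurd (hgood τ a b (by simpa using h) (by simpa using hpre)) hab
  · simpa [redirect_eq_self hw] using h

end BuchiStrategy

open BuchiStrategy in
theorem absorption_dominant_plays_positionally_at_infinite_general {V : Type*} [Fintype V]
    {G : BuchiGame V} {v : V} (S : BuchiStrategy G v)
    (hdom : S.AbsorptionDominant)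
    (w : V) (hw : w ∈ G.V0)
    (hinf : {ρ : List V | ρ ++ [w] ∈ S.tree}.Infinite) :
    ∀ (ρ ρ' : List V) (u u' : V),
      ρ ++ [w, u] ∈ S.tree → ρ' ++ [w, u'] ∈ S.tree → u = u' := by
  classical
  obtain ⟨ρ₀, hρ₀, hgood⟩ := exists_concat_mem_edgesBelowInfinite S w hinf
  have hsucc (ρ : List V) (u : V) (hu : ρ ++ [w, u] ∈ S.tree) : ρ₀ ++ [w, u] ∈ S.tree := by
    by_contra hne
    refine hdom (S.graft hρ₀) ⟨graft_absorbs hρ₀ hgood, (w, u), ?_⟩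
    rw [edgeCount_graft_eq_zero hρ₀ hne]
    exact Set.encard_pos.2 ⟨ρ, hu⟩
  intro ρ ρ' u u' hu hu'
  exact (S.choice0 ρ₀ w hρ₀ hw).unique (hsucc ρ u hu) (hsucc ρ' u' hu')

open BuchiStrategy in
/-- If an absorption-dominant winning strategy `S` from `v` contains infinitely
many occurrences of a Player 0 position `w`, then `S` plays positionally
from `w`. -/
theorem absorption_dominant_plays_positionally_at_infinite {V : Type*} [Fintype V]
    {G : BuchiGame V} {v : V} (S : BuchiStrategy G v)
    (hwin : S.Winning) (hdom : S.AbsorptionDominant)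
    (w : V) (hw : w ∈ G.V0)
    (hinf : {ρ : List V | ρ ++ [w] ∈ S.tree}.Infinite) :
    ∀ (ρ ρ' : List V) (u u' : V),
      ρ ++ [w, u] ∈ S.tree → ρ' ++ [w, u'] ∈ S.tree → u = u' :=
  absorption_dominant_plays_positionally_at_infinite_general S hdom w hw hinf
end

section
/- Every absorption-dominant winning strategy of Player 0 from a position v in a finite Büchi game is persistent: along every single play consistent with the strategy, the strategy never makes two different choices at the same position. -/
/-!
Suppose a play consistent with `S` leaves a Player 0 position `w` at the histories
`ρ ++ [w] <+: ρ' ++ [w]`. Both competitors of `S` are rewirings of `S`: after every move they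
continue as `S` does after a modified history, so their trees map to the tree of `S`
preserving the last edge.

If `w` occurs only finitely often in the tree, shortcutting the loop (continuing from
`ρ ++ [w]` as `S` does from `ρ' ++ [w]`) maps the new tree injectively into the old one and misses
the edge leaving `ρ ++ [w]`, a strict absorption. If `w` occurs infinitely often, some visit
`σ ++ [w]` lies on no path to an occurrence of a finitely-often used edge, since there are only
finitely many such paths. Replaying `S` from `σ ++ [w]` at every visit of `w` then adds
occurrences only of infinitely-often used edges and never leaves `w` other than as `S` does at
`σ ++ [w]`; so `S` itself must leave `w` that way everywhere.
-/

namespace BuchiStrategy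

variable {V : Type*} {G : BuchiGame V} {v0 : V} {S : BuchiStrategy G v0}

theorem ne_nil_of_mem_tree {π : List V} (h : π ∈ S.tree) : π ≠ [] := by
  rintro rfl
  simpa using (S.isPath _ h).1

theorem isChain_of_mem_tree {π : List V} (h : π ∈ S.tree) : π.IsChain G.E :=
  (S.isPath π h).2

theorem edgeCount_ne_top_of_finite {x : V} (hfin : {ρ | ρ ++ [x] ∈ S.tree}.Finite) (y : V) :
    S.edgeCount (x, y) ≠ ⊤ :=
  Set.encard_ne_top_iff.mpr <| hfin.subset fun ρ hρ =>
    S.prefix_closed (ρ ++ [x]) y (by simp) (by simpa using hρ)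

theorem ConsistentPlay.append_edge_mem {f : ℕ → V} (hf : S.ConsistentPlay f) (n : ℕ) :
    (List.range n).map f ++ [f n, f (n + 1)] ∈ S.tree := by
  simpa [List.range_succ] using hf (n + 1)

def rareEdgePrefixes (S : BuchiStrategy G v0) : Set (List V) :=
  {π | ∃ x y Z, S.edgeCount (x, y) ≠ ⊤ ∧ Z ++ [x, y] ∈ S.tree ∧ π <+: Z ++ [x, y]}

theorem finite_rareEdgePrefixes [Finite V] (S : BuchiStrategy G v0) :
    S.rareEdgePrefixes.Finite := by
  refine (Set.finite_iUnion fun e : V × V => Set.finite_iUnion fun hfin : S.edgeCount e ≠ ⊤ =>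
    (Set.encard_ne_top_iff.mp hfin).biUnion fun Z _ => List.finite_toSet (Z ++ [e.1, e.2]).inits
    ).subset ?_
  rintro π ⟨x, y, Z, hfin, hZ, hπ⟩
  simp only [Set.mem_iUnion]
  exact ⟨(x, y), hfin, Z, hZ, (List.mem_inits _ _).mpr hπ⟩

/-- The history of the original strategy followed after the actual play `π`, when after every
move the followed history `h` is replaced by `jump h`. -/
def host (jump : List V → List V) (π : List V) : List V :=
  π.foldl (fun h u => jump h ++ [u]) []

@[simp]
theorem host_nil (jump : List V → List V) : host jump [] = [] := rfl

@[simp]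
theorem host_append_singleton (jump : List V → List V) (π : List V) (u : V) :
    host jump (π ++ [u]) = jump (host jump π) ++ [u] := by
  simp [host, List.foldl_append]

section Shortcut

variable [DecidableEq V] {ρ ρ' : List V}

theorem host_update_of_forall_ne {π : List V} (hπ : ∀ τ ≠ [], π ≠ ρ ++ τ) :
    host (Function.update id ρ ρ') π = π := by
  induction π using List.reverseRecOn with
  | nil => rfl
  | append_singleton σ u ih =>
    have hσ : σ ≠ ρ := by
      rintro rfl
      exact hπ [u] (by simp) rfl
    rw [host_append_singleton, ih fun τ hτ h => hπ (τ ++ [u]) (by simp) (by simp [h]),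
      Function.update_of_ne hσ, id]

theorem host_update_append (hlen : ρ.length ≤ ρ'.length) {τ : List V} (hτ : τ ≠ []) :
    host (Function.update id ρ ρ') (ρ ++ τ) = ρ' ++ τ := by
  induction τ using List.reverseRecOn with
  | nil => exact absurd rfl hτ
  | append_singleton τ u ih =>
    rw [← List.append_assoc, host_append_singleton]
    rcases eq_or_ne τ [] with rfl | hτ'
    · rw [List.append_nil, host_update_of_forall_ne (by simp), Function.update_self]
      rfl
    · have hne : ρ' ++ τ ≠ ρ := fun h => by
        have := congrArg List.length h
        have := List.length_pos_iff.mpr hτ'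
        simp at *
        omega
      rw [ih hτ', Function.update_of_ne hne, id, List.append_assoc]

theorem host_update_injective (hpre : ρ <+: ρ') :
    (host (Function.update id ρ ρ')).Injective := by
  obtain ⟨t, rfl⟩ := hpre
  have hcases : ∀ π,
      (∃ τ ≠ [], π = ρ ++ τ ∧ host (Function.update id ρ (ρ ++ t)) π = ρ ++ t ++ τ) ∨
        ((∀ τ ≠ [], π ≠ ρ ++ τ) ∧ host (Function.update id ρ (ρ ++ t)) π = π) := by
    intro π
    by_cases hext : ∃ τ ≠ [], π = ρ ++ τ
    · obtain ⟨τ, hτ, rfl⟩ := hext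
      exact Or.inl ⟨τ, hτ, rfl, host_update_append (by simp) hτ⟩
    · push Not at hext
      exact Or.inr ⟨hext, host_update_of_forall_ne hext⟩
  intro π₁ π₂ h
  rcases hcases π₁ with ⟨τ₁, hτ₁, rfl, h₁⟩ | ⟨hn₁, h₁⟩ <;>
    rcases hcases π₂ with ⟨τ₂, hτ₂, rfl, h₂⟩ | ⟨hn₂, h₂⟩ <;> rw [h₁, h₂] at h
  · simpa using h
  · exact absurd (by rw [← h, List.append_assoc]) (hn₂ (t ++ τ₁) (by simp [hτ₁]))
  · exact absurd (by rw [h, List.append_assoc]) (hn₁ (t ++ τ₂) (by simp [hτ₂]))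
  · exact h

theorem append_singleton_notMem_range_host_update (hlt : ρ.length < ρ'.length) (a : V) :
    ρ ++ [a] ∉ Set.range (host (Function.update id ρ ρ')) := by
  rintro ⟨π, hπ⟩
  by_cases hext : ∃ τ ≠ [], π = ρ ++ τ
  · obtain ⟨τ, hτ, rfl⟩ := hext
    have hlen := congrArg List.length hπ
    have := List.length_pos_iff.mpr hτ
    rw [host_update_append hlt.le hτ] at hlen
    simp at hlen
    omega
  · push Not at hext
    rw [host_update_of_forall_ne hext] at hπ
    exact hext [a] (by simp) hπ

end Shortcut

structure Redirect (S : BuchiStrategy G v0) where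
  jump : List V → List V
  jump_nil : jump [] = []
  jump_mem_tree_iff : ∀ h, jump h ∈ S.tree ↔ h ∈ S.tree
  getLast?_jump : ∀ h, (jump h).getLast? = h.getLast?

namespace Redirect

variable (r : S.Redirect)

@[simp]
theorem getLast?_host (π : List V) : (host r.jump π).getLast? = π.getLast? := by
  induction π using List.reverseRecOn with
  | nil => rfl
  | append_singleton π u _ => simp

theorem host_singleton (u : V) : host r.jump [u] = [u] := by
  simpa [r.jump_nil] using host_append_singleton r.jump [] u

theorem jump_host_eq_append (ρ : List V) (v : V) :
    ∃ K, r.jump (host r.jump (ρ ++ [v])) = K ++ [v] :=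
  List.getLast?_eq_some_iff.mp (by simp [r.getLast?_jump])

theorem host_mem_of_append_mem {ρ : List V} {u : V} (hρ : ρ ≠ [])
    (h : host r.jump (ρ ++ [u]) ∈ S.tree) : host r.jump ρ ∈ S.tree := by
  rw [host_append_singleton] at h
  have hne : (r.jump (host r.jump ρ)).getLast? ≠ none := by simpa [r.getLast?_jump] using hρ
  exact (r.jump_mem_tree_iff _).mp (S.prefix_closed _ u (fun h0 => hne (by simp [h0])) h)

theorem exists_succ_iff {ρ : List V} {v : V} (h : host r.jump (ρ ++ [v]) ∈ S.tree) :
    ∃ K, K ++ [v] ∈ S.tree ∧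
      ∀ u, host r.jump (ρ ++ [v, u]) ∈ S.tree ↔ K ++ [v, u] ∈ S.tree := by
  obtain ⟨K, hK⟩ := r.jump_host_eq_append ρ v
  refine ⟨K, hK ▸ (r.jump_mem_tree_iff _).mpr h, fun u => ?_⟩
  rw [show ρ ++ [v, u] = ρ ++ [v] ++ [u] by simp, host_append_singleton, hK]
  simp

theorem isPath_of_host_mem {π : List V} (h : host r.jump π ∈ S.tree) :
    π.head? = some v0 ∧ π.IsChain G.E := by
  induction π using List.reverseRecOn with
  | nil => exact absurd h (ne_nil_of_mem_tree · rfl)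
  | append_singleton σ u ih =>
    rcases eq_or_ne σ [] with rfl | hσ
    · rw [List.nil_append, r.host_singleton] at h
      exact S.isPath _ h
    obtain ⟨hhead, hchain⟩ := ih (r.host_mem_of_append_mem hσ h)
    rw [host_append_singleton] at h
    have hedge := (List.isChain_append.mp (isChain_of_mem_tree h)).2.2
    simp only [r.getLast?_jump, getLast?_host] at hedge
    refine ⟨by rwa [List.head?_append_of_ne_nil _ hσ], List.isChain_append.mpr ⟨hchain,
      List.isChain_singleton u, fun x hx y hy => ?_⟩⟩
    simp only [List.head?_cons, Option.mem_def, Option.some.injEq] at hy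
    exact hy ▸ hedge x hx u rfl

def strategy : BuchiStrategy G v0 where
  tree := {π | host r.jump π ∈ S.tree}
  root_mem := by
    show host r.jump [v0] ∈ S.tree
    rw [r.host_singleton]
    exact S.root_mem
  isPath _ := r.isPath_of_host_mem
  prefix_closed _ _ := r.host_mem_of_append_mem
  choice0 ρ v h hv := by
    obtain ⟨K, hK, hsucc⟩ := r.exists_succ_iff h
    show ∃! w, host r.jump (ρ ++ [v, w]) ∈ S.tree
    simpa only [hsucc] using S.choice0 K v hK hv
  choice1 ρ v h hv u huv := by
    obtain ⟨K, hK, hsucc⟩ := r.exists_succ_iff h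
    exact (hsucc u).mpr (S.choice1 K v hK hv u huv)

theorem mem_strategy_tree {π : List V} : π ∈ r.strategy.tree ↔ host r.jump π ∈ S.tree :=
  Iff.rfl

theorem host_append_pair (ρ : List V) (x y : V) :
    ∃ Z, host r.jump (ρ ++ [x, y]) = Z ++ [x, y] := by
  obtain ⟨K, hK⟩ := r.jump_host_eq_append ρ x
  refine ⟨K, ?_⟩
  rw [show ρ ++ [x, y] = ρ ++ [x] ++ [y] by simp, host_append_singleton, hK]
  simp

theorem edgeCount_strategy_le (hinj : (host r.jump).Injective) (x y : V) :
    r.strategy.edgeCount (x, y) ≤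
      {Z | Z ++ [x, y] ∈ S.tree ∩ Set.range (host r.jump)}.encard := by
  choose φ hφ using fun ρ => r.host_append_pair ρ x y
  refine Set.encard_le_encard_of_injOn (f := φ) (fun ρ hρ => ?_) (fun p _ q _ hpq => ?_)
  · have hmem : host r.jump (ρ ++ [x, y]) ∈ S.tree := hρ
    exact ⟨hφ ρ ▸ hmem, ρ ++ [x, y], hφ ρ⟩
  · exact List.append_cancel_right (hinj (by rw [hφ, hφ, hpq]))

theorem absorbs_of_injective (hinj : (host r.jump).Injective) : r.strategy.Absorbs S :=
  fun ⟨x, y⟩ => (r.edgeCount_strategy_le hinj x y).trans (Set.encard_mono fun _ hZ => hZ.1)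

theorem strictlyAbsorbs_of_injective (hinj : (host r.jump).Injective) {Z : List V} {x y : V}
    (hZ : Z ++ [x, y] ∈ S.tree) (hmiss : Z ++ [x, y] ∉ Set.range (host r.jump))
    (hfin : S.edgeCount (x, y) ≠ ⊤) : r.strategy.StrictlyAbsorbs S := by
  refine ⟨r.absorbs_of_injective hinj, (x, y), (r.edgeCount_strategy_le hinj x y).trans_lt ?_⟩
  have hfin' : {Z | Z ++ [x, y] ∈ S.tree}.Finite := Set.encard_ne_top_iff.mp hfin
  calc _ ≤ ({Z' | Z' ++ [x, y] ∈ S.tree} \ {Z}).encard :=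
        Set.encard_mono fun Z' hZ' => ⟨hZ'.1, fun h => hmiss (Set.mem_singleton_iff.mp h ▸ hZ'.2)⟩
    _ < S.edgeCount (x, y) :=
        (hfin'.subset Set.sdiff_subset).encard_lt_encard (Set.sdiff_singleton_ssubset.mpr hZ)

def shortcut [DecidableEq V] {ρ ρ' : List V} (hρ : ρ ∈ S.tree) (hρ' : ρ' ∈ S.tree)
    (hlast : ρ'.getLast? = ρ.getLast?) : S.Redirect where
  jump := Function.update id ρ ρ'
  jump_nil := Function.update_of_ne (ne_nil_of_mem_tree hρ).symm _ _
  jump_mem_tree_iff h := by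
    rcases eq_or_ne h ρ with rfl | hne
    · simp [hρ, hρ']
    · simp [Function.update_of_ne hne]
  getLast?_jump h := by
    rcases eq_or_ne h ρ with rfl | hne
    · simp [hlast]
    · simp [Function.update_of_ne hne]

section PositionalAt

variable {σ : List V} {w : V}

open Classical in
noncomputable def positionalAt (hσ : σ ++ [w] ∈ S.tree) : S.Redirect where
  jump h := if h ∈ S.tree ∧ h.getLast? = some w then σ ++ [w] else h
  jump_nil := by simp
  jump_mem_tree_iff h := by
    split_ifs with hh
    · simp [hh.1, hσ]
    · rfl
  getLast?_jump h := by
    split_ifs with hh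
    · simp [hh.2]
    · rfl

variable (hσ : σ ++ [w] ∈ S.tree)

theorem jump_positionalAt_of_mem {h : List V} (hh : h ∈ S.tree) (hw : h.getLast? = some w) :
    (positionalAt hσ).jump h = σ ++ [w] := by
  classical
  exact if_pos ⟨hh, hw⟩

theorem jump_positionalAt_of_not {h : List V} (hh : ¬(h ∈ S.tree ∧ h.getLast? = some w)) :
    (positionalAt hσ).jump h = h := by
  classical
  exact if_neg hh

theorem host_positionalAt (π : List V) :
    host (positionalAt hσ).jump π = π ∨ σ ++ [w] <+: host (positionalAt hσ).jump π := by
  induction π using List.reverseRecOn with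
  | nil => exact Or.inl rfl
  | append_singleton π u ih =>
    rw [host_append_singleton]
    by_cases hh : host (positionalAt hσ).jump π ∈ S.tree ∧
        (host (positionalAt hσ).jump π).getLast? = some w
    · rw [jump_positionalAt_of_mem hσ hh.1 hh.2]
      exact Or.inr (List.prefix_append _ _)
    · rw [jump_positionalAt_of_not hσ hh]
      rcases ih with h | h
      · exact Or.inl (by rw [h])
      · exact Or.inr (h.trans (List.prefix_append _ _))

theorem mem_tree_of_mem_strategy_positionalAt {ρ : List V} {u : V}
    (h : ρ ++ [w, u] ∈ (positionalAt hσ).strategy.tree) : σ ++ [w, u] ∈ S.tree := by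
  have hmem : host (positionalAt hσ).jump (ρ ++ [w] ++ [u]) ∈ S.tree := by
    simpa using (positionalAt hσ).mem_strategy_tree.mp h
  have hw : host (positionalAt hσ).jump (ρ ++ [w]) ∈ S.tree :=
    (positionalAt hσ).host_mem_of_append_mem (by simp) hmem
  rw [host_append_singleton, jump_positionalAt_of_mem hσ hw (by simp)] at hmem
  simpa using hmem

theorem edgeCount_positionalAt_eq_zero {a : V} (ha : σ ++ [w, a] ∉ S.tree) :
    (positionalAt hσ).strategy.edgeCount (w, a) = 0 :=
  Set.encard_eq_zero.mpr <| Set.eq_empty_of_forall_notMem fun _ hρ =>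
    ha (mem_tree_of_mem_strategy_positionalAt hσ hρ)

theorem absorbs_positionalAt (hrare : σ ++ [w] ∉ S.rareEdgePrefixes) :
    (positionalAt hσ).strategy.Absorbs S := by
  rintro ⟨x, y⟩
  by_cases htop : S.edgeCount (x, y) = ⊤
  · exact htop ▸ le_top
  refine Set.encard_mono fun ρ hρ => ?_
  have hmem : host (positionalAt hσ).jump (ρ ++ [x, y]) ∈ S.tree := hρ
  rcases host_positionalAt hσ (ρ ++ [x, y]) with h | h
  · rwa [h] at hmem
  · obtain ⟨Z, hZ⟩ := (positionalAt hσ).host_append_pair ρ x y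
    rw [hZ] at hmem h
    exact absurd ⟨x, y, Z, htop, hmem, h⟩ hrare

end PositionalAt

end Redirect

namespace AbsorptionDominant

variable (hdom : S.AbsorptionDominant)
include hdom

theorem infinite_visits_of_revisit {ρ ρ' : List V} {w a : V} (ha : ρ ++ [w, a] ∈ S.tree)
    (hpre : ρ ++ [w] <+: ρ') (hρ' : ρ' ++ [w] ∈ S.tree) : {σ | σ ++ [w] ∈ S.tree}.Infinite := by
  classical
  intro hfin
  have hρ : ρ ++ [w] ∈ S.tree := S.prefix_closed _ a (by simp) (by simpa using ha)
  have hlt : (ρ ++ [w]).length < (ρ' ++ [w]).length := by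
    simpa using Nat.lt_add_one_of_le hpre.length_le
  let r := Redirect.shortcut hρ hρ' (by simp)
  refine hdom r.strategy (r.strictlyAbsorbs_of_injective
    (host_update_injective (hpre.trans (List.prefix_append _ _))) ha ?_
    (edgeCount_ne_top_of_finite hfin a))
  show ρ ++ [w, a] ∉ Set.range (host (Function.update id (ρ ++ [w]) (ρ' ++ [w])))
  simpa using append_singleton_notMem_range_host_update hlt a

theorem eq_of_infinite_visits [Finite V] {w : V} (hw : w ∈ G.V0)
    (hinf : {σ | σ ++ [w] ∈ S.tree}.Infinite) {ρ ρ' : List V} {a b : V}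
    (ha : ρ ++ [w, a] ∈ S.tree) (hb : ρ' ++ [w, b] ∈ S.tree) : a = b := by
  obtain ⟨_, ⟨σ, hσ, rfl⟩, hrare⟩ :=
    ((hinf.image fun _ _ _ _ => List.append_cancel_right).sdiff
      S.finite_rareEdgePrefixes).nonempty
  obtain ⟨c, hc, hcu⟩ := S.choice0 σ w hσ hw
  have hchoice : ∀ ρ a, ρ ++ [w, a] ∈ S.tree → a = c := by
    intro ρ a ha
    by_contra hac
    refine hdom _ ⟨Redirect.absorbs_positionalAt hσ hrare, (w, a), ?_⟩
    rw [Redirect.edgeCount_positionalAt_eq_zero hσ fun h => hac (hcu a h)]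
    exact Set.encard_pos.mpr ⟨ρ, ha⟩
  exact (hchoice ρ a ha).trans (hchoice ρ' b hb).symm

end AbsorptionDominant

end BuchiStrategy

open BuchiStrategy in
theorem absorption_dominant_winning_persistent_general {V : Type*} [Fintype V]
    {G : BuchiGame V} {v : V} (S : BuchiStrategy G v)
    (hdom : S.AbsorptionDominant) :
    ∀ f : ℕ → V, S.ConsistentPlay f →
      ∀ i j : ℕ, f i = f j → f i ∈ G.V0 → f (i + 1) = f (j + 1) := by
  intro f hf i j hij hw
  wlog hlt : i < j generalizing i j
  · rcases (not_lt.mp hlt).eq_or_lt with rfl | hji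
    · rfl
    · exact (this j i hij.symm (hij ▸ hw) hji).symm
  have hj : (List.range j).map f ++ [f i, f (j + 1)] ∈ S.tree := hij ▸ hf.append_edge_mem j
  have hpre : List.range (i + 1) <+: List.range j := by
    simpa [List.take_range, Nat.succ_le_of_lt hlt] using List.take_prefix (i + 1) (List.range j)
  have hinf := hdom.infinite_visits_of_revisit (hf.append_edge_mem i)
    (by simpa [List.range_succ] using hpre.map f)
    (S.prefix_closed _ _ (by simp) (by simpa using hj))
  exact hdom.eq_of_infinite_visits hw hinf (hf.append_edge_mem i) hj

open BuchiStrategy in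
/-- Every absorption-dominant winning strategy is persistent: along every single
play consistent with it, the strategy never makes two different choices at the
same Player 0 position. -/
theorem absorption_dominant_winning_persistent {V : Type*} [Fintype V]
    {G : BuchiGame V} {v : V} (S : BuchiStrategy G v)
    (hwin : S.Winning) (hdom : S.AbsorptionDominant) :
    ∀ f : ℕ → V, S.ConsistentPlay f →
      ∀ i j : ℕ, f i = f j → f i ∈ G.V0 → f (i + 1) = f (j + 1) :=
  absorption_dominant_winning_persistent_general S hdom
end
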